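/- arXiv:2211.12442 — 3 statements merged into one kernel-verified Lean document; each statement's English description precedes it below -/
import Mathlib

section
/- Let I ⊆ ℝ be an interval, T ∈ (0,∞], and let f, g: [0,T) → I be locally absolutely continuous with f(0) = g(0). Suppose h: I × [0,T) → ℝ satisfies: (i) h(x,·) is measurable for each x ∈ I; (ii) there is a locally integrable p: [0,T) → [0,∞) such that |h(x,t) − h(y,t)| ≤ p(t)|x−y| for all t ∈ [0,T) and x, y ∈ I; (iii) g'(t) = h(g(t),t) and f'(t) ≤ h(f(t),t) for a.e. t ∈ [0,T). Then f(t) ≤ g(t) for all t ∈ [0,T). -/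
/-!
Put `u = f - g`. The Lipschitz bound turns the two differential relations into
`u' ≤ p |u|` a.e., and `u 0 = 0`. If `u t > 0`, let `s` be the last point before `t` with
`u s ≤ 0` and take `c ∈ (s, t]` with `∫ p < 1` on `[s, c]`. If the maximum `M > 0` of `u` on
`[s, c]` is attained at `τ`, then `M ≤ u τ - u s = ∫_s^τ u' ≤ M ∫_s^c p < M`.
-/

open Set MeasureTheory Filter intervalIntegral
open scoped ENNReal Topology

lemma IntervalIntegrable.mono_Icc {f : ℝ → ℝ} {a b x y : ℝ}
    (hf : IntervalIntegrable f volume a b) (hx : x ∈ Icc a b) (hy : y ∈ Icc a b) :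
    IntervalIntegrable f volume x y :=
  hf.mono_set (uIcc_subset_uIcc (Icc_subset_uIcc hx) (Icc_subset_uIcc hy))

lemma sub_eq_integral_of_eq_add_integral {u u' : ℝ → ℝ} {a b x y : ℝ}
    (hu : ∀ t ∈ Icc a b, u t = u a + ∫ s in a..t, u' s)
    (hu' : IntervalIntegrable u' volume a b) (hx : x ∈ Icc a b) (hy : y ∈ Icc a b) :
    u y - u x = ∫ s in x..y, u' s := by
  rw [hu y hy, hu x hx, add_sub_add_left_eq_sub]
  have ha : a ∈ Icc a b := left_mem_Icc.2 (hx.1.trans hx.2)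
  exact integral_interval_sub_left (hu'.mono_Icc ha hy) (hu'.mono_Icc ha hx)

lemma continuousOn_of_eq_add_integral {u u' : ℝ → ℝ} {a b : ℝ}
    (hu : ∀ t ∈ Icc a b, u t = u a + ∫ s in a..t, u' s)
    (hu' : IntervalIntegrable u' volume a b) : ContinuousOn u (Icc a b) :=
  (continuousOn_const.add ((continuousOn_primitive_interval' hu' left_mem_uIcc).mono
    Icc_subset_uIcc)).congr hu

lemma ContinuousOn.exists_nonpos_forall_pos_Ioc {u : ℝ → ℝ} {a b : ℝ} (hab : a ≤ b)
    (hu : ContinuousOn u (Icc a b)) (ha : u a ≤ 0) (hb : 0 < u b) :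
    ∃ s ∈ Ico a b, u s ≤ 0 ∧ ∀ t ∈ Ioc s b, 0 < u t := by
  have hS : IsCompact (Icc a b ∩ u ⁻¹' Iic 0) :=
    isCompact_Icc.of_isClosed_subset
      (hu.preimage_isClosed_of_isClosed isClosed_Icc isClosed_Iic) inter_subset_left
  obtain ⟨s, ⟨hs, hus⟩, hmax⟩ := hS.exists_isGreatest ⟨a, ⟨le_rfl, hab⟩, ha⟩
  refine ⟨s, ⟨hs.1, hs.2.lt_of_ne ?_⟩, hus, fun t ht => ?_⟩
  · rintro rfl
    exact (not_le.2 hb) hus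
  · by_contra! hut
    exact (not_le.2 ht.1) (hmax ⟨⟨hs.1.trans ht.1.le, ht.2⟩, hut⟩)

lemma exists_integral_lt_of_intervalIntegrable {p : ℝ → ℝ} {s b ε : ℝ}
    (hp : IntervalIntegrable p volume s b) (hsb : s < b) (hε : 0 < ε) :
    ∃ c ∈ Ioc s b, ∫ x in s..c, p x < ε := by
  have hcont : ContinuousWithinAt (fun c => ∫ x in s..c, p x) (Icc s b) s := by
    have := continuousOn_primitive_interval' hp left_mem_uIcc
    rw [uIcc_of_le hsb.le] at this
    exact this s (left_mem_Icc.2 hsb.le)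
  have hsmall : ∀ᶠ c in 𝓝[Ioc s b] s, ∫ x in s..c, p x < ε := by
    refine ((hcont.mono Ioc_subset_Icc_self).tendsto.eventually_lt_const ?_)
    simpa using hε
  have : NeBot (𝓝[Ioc s b] s) := left_nhdsWithin_Ioc_neBot hsb
  obtain ⟨c, hc, hcs⟩ := (hsmall.and self_mem_nhdsWithin).exists
  exact ⟨c, hcs, hc⟩

lemma not_forall_pos_of_sub_le_integral_mul_abs {u p : ℝ → ℝ} {s c : ℝ} (hsc : s < c)
    (hu : ContinuousOn u (Icc s c)) (hp : IntervalIntegrable p volume s c)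
    (hp0 : ∀ x ∈ Icc s c, 0 ≤ p x) (hP : ∫ x in s..c, p x < 1) (hs : u s ≤ 0)
    (hgrowth : ∀ y ∈ Icc s c, u y - u s ≤ ∫ x in s..y, p x * |u x|) :
    ¬ ∀ t ∈ Ioc s c, 0 < u t := by
  intro hpos
  obtain ⟨τ, hτ, hτmax⟩ := isCompact_Icc.exists_isMaxOn (nonempty_Icc.2 hsc.le) hu
  have hM : 0 < u τ := (hpos c ⟨hsc, le_rfl⟩).trans_le (hτmax (right_mem_Icc.2 hsc.le))
  have hsub : Icc s τ ⊆ Icc s c := Icc_subset_Icc_right hτ.2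
  have hpτ : IntervalIntegrable p volume s τ := hp.mono_Icc (left_mem_Icc.2 hsc.le) hτ
  have habs : ∀ x ∈ Ioo s τ, p x * |u x| ≤ p x * u τ := fun x hx =>
    mul_le_mul_of_nonneg_left
      ((abs_of_pos (hpos x ⟨hx.1, hx.2.le.trans hτ.2⟩)).trans_le
        (hτmax (hsub (Ioo_subset_Icc_self hx))))
      (hp0 x (hsub (Ioo_subset_Icc_self hx)))
  have hPτ : ∫ x in s..τ, p x ≤ ∫ x in s..c, p x :=
    integral_mono_interval le_rfl hτ.1 hτ.2
      ((ae_restrict_mem measurableSet_Ioc).mono fun x hx => hp0 x (Ioc_subset_Icc_self hx)) hp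
  have : u τ < u τ := calc
    u τ ≤ u τ - u s := by linarith
    _ ≤ ∫ x in s..τ, p x * |u x| := hgrowth τ hτ
    _ ≤ ∫ x in s..τ, p x * u τ :=
        integral_mono_on_of_le_Ioo hτ.1 (hpτ.mul_continuousOn ((hu.mono hsub).abs.mono
          (by rw [uIcc_of_le hτ.1]))) (hpτ.mul_const _) habs
    _ = (∫ x in s..τ, p x) * u τ := integral_mul_const _ _
    _ < 1 * u τ := mul_lt_mul_of_pos_right (hPτ.trans_lt hP) hM
    _ = u τ := one_mul _
  exact lt_irrefl _ this

section
variable {u u' p : ℝ → ℝ} {a b : ℝ}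

lemma sub_le_integral_mul_abs_of_ae_le (hu : ∀ t ∈ Icc a b, u t = u a + ∫ s in a..t, u' s)
    (hu' : IntervalIntegrable u' volume a b) (hp : IntervalIntegrable p volume a b)
    (hle : ∀ᵐ t ∂volume.restrict (Icc a b), u' t ≤ p t * |u t|)
    {x y : ℝ} (hx : x ∈ Icc a b) (hy : y ∈ Icc x b) :
    u y - u x ≤ ∫ t in x..y, p t * |u t| := by
  have hsub : Icc x y ⊆ Icc a b := Icc_subset_Icc hx.1 hy.2
  have hy' : y ∈ Icc a b := hsub (right_mem_Icc.2 hy.1)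
  have hcont : ContinuousOn (fun t => |u t|) (uIcc x y) := by
    rw [uIcc_of_le hy.1]
    exact ((continuousOn_of_eq_add_integral hu hu').mono hsub).abs
  rw [sub_eq_integral_of_eq_add_integral hu hu' hx hy']
  exact integral_mono_ae_restrict hy.1 (hu'.mono_Icc hx hy')
    ((hp.mono_Icc hx hy').mul_continuousOn hcont) (ae_restrict_of_ae_restrict_of_subset hsub hle)

lemma nonpos_of_eq_add_integral_of_ae_le_mul_abs
    (hu : ∀ t ∈ Icc a b, u t = u a + ∫ s in a..t, u' s)
    (hu' : IntervalIntegrable u' volume a b) (hp : IntervalIntegrable p volume a b)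
    (hp0 : ∀ t ∈ Icc a b, 0 ≤ p t) (hle : ∀ᵐ t ∂volume.restrict (Icc a b), u' t ≤ p t * |u t|)
    (ha : u a ≤ 0) : ∀ t ∈ Icc a b, u t ≤ 0 := by
  intro t ht
  by_contra! hut
  have hcont := continuousOn_of_eq_add_integral hu hu'
  obtain ⟨s, hs, hus, hpos⟩ :=
    (hcont.mono (Icc_subset_Icc_right ht.2)).exists_nonpos_forall_pos_Ioc ht.1 ha hut
  have hsa : s ∈ Icc a b := ⟨hs.1, hs.2.le.trans ht.2⟩
  obtain ⟨c, hc, hP⟩ := exists_integral_lt_of_intervalIntegrable (hp.mono_Icc hsa ht) hs.2 one_pos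
  have hsc : Icc s c ⊆ Icc a b := Icc_subset_Icc hs.1 (hc.2.trans ht.2)
  refine not_forall_pos_of_sub_le_integral_mul_abs hc.1 (hcont.mono hsc)
    (hp.mono_Icc hsa (hsc (right_mem_Icc.2 hc.1.le))) (fun x hx => hp0 x (hsc hx)) hP hus
    (fun y hy => sub_le_integral_mul_abs_of_ae_le hu hu' hp hle hsa ⟨hy.1, (hsc hy).2⟩)
    (fun x hx => hpos x ⟨hx.1, hx.2.trans hc.2⟩)

end

theorem comparison_lemma_general (T : ℝ≥0∞) (I : Set ℝ)
    (D : Set ℝ) (hD : D = {t : ℝ | 0 ≤ t ∧ (ENNReal.ofReal t) < T})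
    (f g f' g' : ℝ → ℝ)
    (hfI : ∀ t ∈ D, f t ∈ I) (hgI : ∀ t ∈ D, g t ∈ I)
    (hf0 : f 0 = g 0)
    (hfint : ∀ t ∈ D, IntervalIntegrable f' volume 0 t)
    (hgint : ∀ t ∈ D, IntervalIntegrable g' volume 0 t)
    (hfFTC : ∀ t ∈ D, f t = f 0 + ∫ s in (0:ℝ)..t, f' s)
    (hgFTC : ∀ t ∈ D, g t = g 0 + ∫ s in (0:ℝ)..t, g' s)
    (h : ℝ → ℝ → ℝ)
    (p : ℝ → ℝ) (hp : ∀ t ∈ D, 0 ≤ p t)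
    (hpint : ∀ t ∈ D, IntervalIntegrable p volume 0 t)
    (hLip : ∀ t ∈ D, ∀ x ∈ I, ∀ y ∈ I, |h x t - h y t| ≤ p t * |x - y|)
    (hae : ∀ᵐ t ∂(volume.restrict D), g' t = h (g t) t ∧ f' t ≤ h (f t) t) :
    ∀ t ∈ D, f t ≤ g t := by
  intro t₀ ht₀
  have ht₀0 : 0 ≤ t₀ := by rw [hD] at ht₀; exact ht₀.1
  have hsub : Icc 0 t₀ ⊆ D := by
    rw [hD] at ht₀ ⊢
    exact fun t ht => ⟨ht.1, (ENNReal.ofReal_le_ofReal ht.2).trans_lt ht₀.2⟩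
  have hFTC : ∀ t ∈ Icc 0 t₀, (f - g) t = (f - g) 0 + ∫ s in (0:ℝ)..t, (f' - g') s := by
    intro t ht
    simp only [Pi.sub_apply]
    rw [integral_sub (hfint t (hsub ht)) (hgint t (hsub ht)), hfFTC t (hsub ht),
      hgFTC t (hsub ht)]
    ring
  have hle : ∀ᵐ t ∂volume.restrict (Icc 0 t₀), (f' - g') t ≤ p t * |(f - g) t| := by
    filter_upwards [ae_restrict_of_ae_restrict_of_subset hsub hae,
      ae_restrict_mem measurableSet_Icc] with t ⟨hg', hf'⟩ ht
    have hL := hLip t (hsub ht) _ (hfI t (hsub ht)) _ (hgI t (hsub ht))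
    simp only [Pi.sub_apply]
    linarith [le_abs_self (h (f t) t - h (g t) t)]
  have := nonpos_of_eq_add_integral_of_ae_le_mul_abs hFTC ((hfint t₀ ht₀).sub (hgint t₀ ht₀))
    (hpint t₀ ht₀) (fun t ht => hp t (hsub ht)) hle (by simp [hf0]) t₀ ⟨ht₀0, le_rfl⟩
  simpa [sub_nonpos] using this

/-- Comparison lemma for Carathéodory ODEs: if `g` solves `g' = h(g,·)`, `f` is a
subsolution with the same initial value, and `h` is Lipschitz in the space variable
with a locally integrable Lipschitz constant `p`, then `f ≤ g` on `[0,T)`.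
Here local absolute continuity of `f, g` is expressed through the fundamental
theorem of calculus with locally integrable a.e. derivatives `f', g'`. -/
theorem comparison_lemma (T : ℝ≥0∞) (hT : 0 < T) (I : Set ℝ) (hI : OrdConnected I)
    (D : Set ℝ) (hD : D = {t : ℝ | 0 ≤ t ∧ (ENNReal.ofReal t) < T})
    (f g f' g' : ℝ → ℝ)
    (hfI : ∀ t ∈ D, f t ∈ I) (hgI : ∀ t ∈ D, g t ∈ I)
    (hf0 : f 0 = g 0)
    (hfint : ∀ t ∈ D, IntervalIntegrable f' volume 0 t)
    (hgint : ∀ t ∈ D, IntervalIntegrable g' volume 0 t)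
    (hfFTC : ∀ t ∈ D, f t = f 0 + ∫ s in (0:ℝ)..t, f' s)
    (hgFTC : ∀ t ∈ D, g t = g 0 + ∫ s in (0:ℝ)..t, g' s)
    (h : ℝ → ℝ → ℝ)
    (hmeas : ∀ x ∈ I, Measurable (fun t => h x t))
    (p : ℝ → ℝ) (hp : ∀ t ∈ D, 0 ≤ p t)
    (hpint : ∀ t ∈ D, IntervalIntegrable p volume 0 t)
    (hLip : ∀ t ∈ D, ∀ x ∈ I, ∀ y ∈ I, |h x t - h y t| ≤ p t * |x - y|)
    (hae : ∀ᵐ t ∂(volume.restrict D), g' t = h (g t) t ∧ f' t ≤ h (f t) t) :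
    ∀ t ∈ D, f t ≤ g t :=
  comparison_lemma_general T I D hD f g f' g' hfI hgI hf0 hfint hgint hfFTC hgFTC h p hp hpint hLip
    hae
end

section
/- Let v: (0,∞) → (0,∞) be a Bernstein function with v(θ) ≥ θ for all θ > 0, and let μ_x be a probability measure on [0,∞] with ∫_{[0,∞)} e^{−θy} μ_x(dy) = e^{−x v(θ)} for all θ > 0, where x > 0. Then μ_x([0,x)) = 0, i.e., the measure μ_x is supported on [x,∞]. -/
open Set Real MeasureTheory
open scoped ENNReal

/-- `v` is a Bernstein function on `(0,∞)`. -/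
def IsBernstein (f : ℝ → ℝ) : Prop :=
  ContDiffOn ℝ (⊤ : ℕ∞) f (Ioi 0) ∧
  (∀ θ ∈ Ioi (0:ℝ), 0 ≤ f θ) ∧
  (∀ n : ℕ, 1 ≤ n → ∀ θ ∈ Ioi (0:ℝ),
    0 ≤ (-1 : ℝ) ^ (n - 1) * iteratedDerivWithin n f (Ioi 0) θ)

/-- If a Bernstein function `v` satisfies `v(θ) ≥ θ` for all `θ > 0` and `μ_x` is a
probability measure on `[0,∞]` with Laplace transform `e^{-x v(θ)}`, then
`μ_x([0,x)) = 0`. -/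
theorem law_supported_above_x (v : ℝ → ℝ) (hv : IsBernstein v)
    (hvpos : ∀ θ > (0:ℝ), 0 < v θ)
    (hvge : ∀ θ > (0:ℝ), θ ≤ v θ)
    (x : ℝ) (hx : 0 < x) (μ : Measure ℝ≥0∞) (hμ : IsProbabilityMeasure μ)
    (hlaplace : ∀ θ > (0:ℝ),
      ∫ y in {y : ℝ≥0∞ | y ≠ ⊤}, Real.exp (-θ * y.toReal) ∂μ =
        Real.exp (-x * v θ)) :
    μ (Iio (ENNReal.ofReal x)) = 0 := by
  -- Main step: for any 0 ≤ c < x, μ (Iio (ofReal c)) = 0.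
  have key : ∀ c : ℝ, 0 ≤ c → c < x → μ (Iio (ENNReal.ofReal c)) = 0 := by
    intro c hc0 hcx
    set A : Set ℝ≥0∞ := Iio (ENNReal.ofReal c) with hA
    have hAmeas : MeasurableSet A := measurableSet_Iio
    have hAsub : A ⊆ {y : ℝ≥0∞ | y ≠ ⊤} := by
      intro y hy
      simp only [mem_setOf_eq]
      exact ne_top_of_lt (lt_of_lt_of_le hy le_top)
    -- pointwise bound on A
    have hbound : ∀ θ : ℝ, 0 < θ → ∀ y ∈ A, Real.exp (-θ * c) ≤ Real.exp (-θ * y.toReal) := by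
      intro θ hθ y hy
      apply Real.exp_le_exp.2
      have hy' : y.toReal ≤ c := by
        have h1 : y.toReal ≤ (ENNReal.ofReal c).toReal :=
          ENNReal.toReal_mono (by simp) (le_of_lt hy)
        simpa [ENNReal.toReal_ofReal hc0] using h1
      nlinarith
    -- measurability / integrability
    have hmeas : ∀ θ : ℝ, Measurable fun y : ℝ≥0∞ => Real.exp (-θ * y.toReal) := by
      intro θ
      exact Real.measurable_exp.comp (ENNReal.measurable_toReal.const_mul (-θ))
    have hint : ∀ θ : ℝ, 0 < θ → Integrable (fun y : ℝ≥0∞ => Real.exp (-θ * y.toReal)) μ := by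
      intro θ hθ
      refine (integrable_const (1:ℝ)).mono' (hmeas θ).aestronglyMeasurable ?_
      filter_upwards with y
      rw [Real.norm_eq_abs, abs_of_pos (Real.exp_pos _)]
      apply Real.exp_le_one_iff.2
      have : 0 ≤ y.toReal := ENNReal.toReal_nonneg
      nlinarith
    -- the main inequality
    have hineq : ∀ θ : ℝ, 0 < θ → (μ A).toReal ≤ Real.exp (-θ * (x - c)) := by
      intro θ hθ
      have h1 : Real.exp (-θ * c) * (μ A).toReal ≤
          ∫ y in A, Real.exp (-θ * y.toReal) ∂μ := by
        have h := MeasureTheory.setIntegral_ge_of_const_le hAmeas (measure_ne_top μ A)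
          (hbound θ hθ) (hint θ hθ).integrableOn
        rw [smul_eq_mul, mul_comm] at h
        exact h
      have h2 : ∫ y in A, Real.exp (-θ * y.toReal) ∂μ ≤
          ∫ y in {y : ℝ≥0∞ | y ≠ ⊤}, Real.exp (-θ * y.toReal) ∂μ := by
        apply MeasureTheory.setIntegral_mono_set (hint θ hθ).integrableOn
        · filter_upwards with y using le_of_lt (Real.exp_pos _)
        · exact HasSubset.Subset.eventuallyLE hAsub
      have h3 := hlaplace θ hθ
      have h4 : Real.exp (-x * v θ) ≤ Real.exp (-x * θ) := by
        apply Real.exp_le_exp.2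
        have := hvge θ hθ
        nlinarith
      have h5 : Real.exp (-θ * c) * (μ A).toReal ≤ Real.exp (-x * θ) := by
        calc Real.exp (-θ * c) * (μ A).toReal ≤ _ := h1
          _ ≤ _ := h2
          _ = Real.exp (-x * v θ) := h3
          _ ≤ _ := h4
      have hepos : 0 < Real.exp (-θ * c) := Real.exp_pos _
      have h6 : (μ A).toReal ≤ Real.exp (-x * θ) / Real.exp (-θ * c) :=
        (le_div_iff₀ hepos).2 (by linarith [h5])
      calc (μ A).toReal ≤ Real.exp (-x * θ) / Real.exp (-θ * c) := h6
        _ = Real.exp (-θ * (x - c)) := by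
            rw [← Real.exp_sub]; ring_nf
    -- take θ → ∞
    have htend : Filter.Tendsto (fun θ : ℝ => Real.exp (-θ * (x - c)))
        Filter.atTop (nhds 0) := by
      have hxc : 0 < x - c := by linarith
      have h1 : Filter.Tendsto (fun θ : ℝ => θ * (x - c)) Filter.atTop Filter.atTop :=
        Filter.Tendsto.atTop_mul_const hxc Filter.tendsto_id
      have h3 := Real.tendsto_exp_atBot.comp (Filter.tendsto_neg_atTop_atBot.comp h1)
      have heq : (fun θ : ℝ => Real.exp (-θ * (x - c))) =
          Real.exp ∘ Neg.neg ∘ fun θ : ℝ => θ * (x - c) := by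
        funext θ; simp [Function.comp, neg_mul]
      rw [heq]
      exact h3
    have hle : (μ A).toReal ≤ 0 := by
      apply ge_of_tendsto htend
      filter_upwards [Filter.eventually_gt_atTop (0:ℝ)] with θ hθ
      exact hineq θ hθ
    have hz : (μ A).toReal = 0 := le_antisymm hle ENNReal.toReal_nonneg
    exact (ENNReal.toReal_eq_zero_iff _).1 hz |>.resolve_right (measure_ne_top μ A)
  -- cover Iio (ofReal x) by countably many Iio (ofReal c_n)
  have hcover : Iio (ENNReal.ofReal x) ⊆
      ⋃ n : ℕ, Iio (ENNReal.ofReal (x - x / (n + 1))) := by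
    intro y hy
    have hytop : y ≠ ⊤ := ne_top_of_lt (lt_of_lt_of_le hy le_top)
    have hyx : y.toReal < x := by
      have hy' : y < ENNReal.ofReal x := hy
      have hle : y.toReal ≤ (ENNReal.ofReal x).toReal :=
        ENNReal.toReal_mono ENNReal.ofReal_ne_top hy'.le
      rcases lt_or_eq_of_le hle with h | h
      · simpa [ENNReal.toReal_ofReal hx.le] using h
      · exfalso
        have hEq : y = ENNReal.ofReal x := by
          rw [← ENNReal.ofReal_toReal hytop, h, ENNReal.ofReal_toReal (by simp)]
        rw [hEq] at hy
        exact absurd (mem_Iio.1 hy) (lt_irrefl _)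
    obtain ⟨n, hn⟩ := exists_nat_gt (x / (x - y.toReal))
    refine mem_iUnion.2 ⟨n, ?_⟩
    have hxy : 0 < x - y.toReal := by linarith
    have hn1 : x / (x - y.toReal) < n + 1 := by
      have : (n:ℝ) ≤ n + 1 := by linarith
      linarith
    have hnpos : (0:ℝ) < n + 1 := by positivity
    have hsmall : x / (n + 1) < x - y.toReal := by
      rw [div_lt_iff₀ hnpos]
      rw [div_lt_iff₀ hxy] at hn1
      nlinarith
    have hyc : y.toReal < x - x / (n + 1) := by linarith
    rw [mem_Iio, ← ENNReal.ofReal_toReal hytop]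
    exact ENNReal.ofReal_lt_ofReal_iff_of_nonneg ENNReal.toReal_nonneg |>.2 hyc
  refine measure_mono_null hcover (measure_iUnion_null fun n => ?_)
  rcases le_or_gt (x - x / (n + 1)) 0 with h | h
  · have h0 : ENNReal.ofReal (x - x / (n + 1)) = 0 := ENNReal.ofReal_eq_zero.2 h
    rw [h0, show (Iio (0:ℝ≥0∞)) = ∅ from by ext z; simp]
    exact measure_empty
  · apply key _ h.le
    have : 0 < x / ((n:ℝ) + 1) := by positivity
    linarith
end

section
/- Let v: ℍ → ℍ be holomorphic on the right half-plane ℍ = {Re ζ > 0}, mapping (0,∞) into (0,∞), and suppose there exists F holomorphic on the unit disk with F(e^{−ζ}) = exp(−v(ζ)) for all ζ ∈ ℍ. If v is injective on ℍ, then lim_{θ→+∞} v(θ) = +∞ and F(0) = 0. -/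
open Set Complex Filter
open scoped Topology Real

/-!
If `F(0) = c ≠ 0`, then near `0` the function `F / c` has a holomorphic logarithm, and on a far
half-plane `u(ζ) = v(ζ) + log (F(e^{-ζ}) / c)` satisfies `e^{u} = c⁻¹`. A holomorphic function
with constant exponential on a connected open set is constant, and `F(e^{-ζ})` is
`2πi`-periodic, so `v(ζ + 2πi) = v(ζ)` there, contradicting injectivity. Hence `F(0) = 0`, and
then `|e^{-v(θ)}| = |F(e^{-θ})| → 0` forces `Re v(θ) → ∞`.
-/

theorem IsOpen.is_const_of_exp_eq {s : Set ℂ} {u : ℂ → ℂ} {c : ℂ} (hs : IsOpen s)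
    (hs' : IsPreconnected s) (hu : DifferentiableOn ℂ u s) (hexp : ∀ z ∈ s, exp (u z) = c)
    {x y : ℂ} (hx : x ∈ s) (hy : y ∈ s) : u x = u y := by
  refine hs.is_const_of_deriv_eq_zero hs' hu (fun z hz => ?_) hx hy
  have hd : HasDerivAt (fun w => exp (u w)) (exp (u z) * deriv u z) z :=
    ((hu z hz).differentiableAt (hs.mem_nhds hz)).hasDerivAt.cexp
  have h0 : HasDerivAt (fun w => exp (u w)) 0 z :=
    (hasDerivAt_const z c).congr_of_eventuallyEq
      (eventually_of_mem (hs.mem_nhds hz) hexp)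
  simpa [exp_ne_zero] using hd.unique h0

theorem tendsto_exp_neg_comap_re_atTop :
    Tendsto (fun ζ : ℂ => exp (-ζ)) (comap re atTop) (𝓝 0) :=
  tendsto_exp_comap_re_atBot.comp <| tendsto_comap_iff.2 <|
    tendsto_neg_atTop_atBot.comp tendsto_comap

theorem exists_apply_add_two_pi_I_eq_of_ne_zero {v F : ℂ → ℂ}
    (hv : DifferentiableOn ℂ v {ζ : ℂ | 0 < ζ.re})
    (hF : DifferentiableOn ℂ F (Metric.ball (0:ℂ) 1))
    (hlift : ∀ ζ : ℂ, 0 < ζ.re → F (exp (-ζ)) = exp (-(v ζ))) (hc : F 0 ≠ 0) :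
    ∃ ζ : ℂ, 0 < ζ.re ∧ v (ζ + 2 * π * I) = v ζ := by
  set c := F 0
  have hball : Metric.ball (0:ℂ) 1 ∈ 𝓝 0 := Metric.ball_mem_nhds 0 one_pos
  have hnear : ∀ᶠ z in 𝓝 0, F z / c ∈ slitPlane ∧ DifferentiableAt ℂ F z := by
    refine ((hF.continuousOn.continuousAt hball).div_const c).eventually_mem ?_
      |>.and (hF.eventually_differentiableAt hball)
    exact isOpen_slitPlane.mem_nhds (by simp [c, hc])
  obtain ⟨R, -, hR⟩ := (atTop_basis.comap re).eventually_iff.1 <|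
    (tendsto_exp_neg_comap_re_atTop.eventually hnear).and
      (tendsto_comap.eventually (eventually_gt_atTop 0))
  set S := {ζ : ℂ | R < ζ.re}
  have hS : ∀ ζ ∈ S, (F (exp (-ζ)) / c ∈ slitPlane ∧ DifferentiableAt ℂ F (exp (-ζ))) ∧
      0 < ζ.re := fun ζ hζ => hR (le_of_lt (show R < ζ.re from hζ))
  set u : ℂ → ℂ := fun ζ => v ζ + log (F (exp (-ζ)) / c)
  have hexp : ∀ ζ ∈ S, exp (u ζ) = c⁻¹ := by
    intro ζ hζ
    have hne : F (exp (-ζ)) ≠ 0 := by rw [hlift ζ (hS ζ hζ).2]; exact exp_ne_zero _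
    rw [exp_add, exp_log (div_ne_zero hne hc), hlift ζ (hS ζ hζ).2, exp_neg]
    field_simp [exp_ne_zero]
  have hu : DifferentiableOn ℂ u S := by
    intro ζ hζ
    obtain ⟨⟨hslit, hFd⟩, hre⟩ := hS ζ hζ
    have hvd : DifferentiableAt ℂ v ζ :=
      hv.differentiableAt ((isOpen_lt continuous_const continuous_re).mem_nhds hre)
    exact (hvd.add (((hFd.comp ζ (differentiable_neg ζ).cexp).div_const c).clog hslit))
      |>.differentiableWithinAt
  have hSopen : IsOpen S := isOpen_lt continuous_const continuous_re
  set ζ₀ : ℂ := ((R + 1 : ℝ) : ℂ)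
  have hζ₀ : ζ₀ ∈ S := by simp [S, ζ₀]
  have hζ₁ : ζ₀ + 2 * π * I ∈ S := by simp [S, ζ₀]
  have hperiod : exp (-(ζ₀ + 2 * π * I)) = exp (-ζ₀) := by
    rw [neg_add]; exact exp_periodic.neg (-ζ₀)
  have := hSopen.is_const_of_exp_eq (convex_halfSpace_re_gt R).isPreconnected hu hexp hζ₁ hζ₀
  simp only [u, hperiod] at this
  exact ⟨ζ₀, (hS ζ₀ hζ₀).2, add_right_cancel this⟩

theorem lift_limit_and_F_zero_general (v F : ℂ → ℂ)
    (hv : DifferentiableOn ℂ v {ζ : ℂ | 0 < ζ.re})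
    (hF : DifferentiableOn ℂ F (Metric.ball (0:ℂ) 1))
    (hlift : ∀ ζ : ℂ, 0 < ζ.re → F (Complex.exp (-ζ)) = Complex.exp (-(v ζ)))
    (hinj : InjOn v {ζ : ℂ | 0 < ζ.re}) :
    Tendsto (fun θ : ℝ => (v θ).re) atTop atTop ∧ F 0 = 0 := by
  have hF0 : F 0 = 0 := by
    by_contra hc
    obtain ⟨ζ, hζ, hper⟩ := exists_apply_add_two_pi_I_eq_of_ne_zero hv hF hlift hc
    have := hinj (by simpa using hζ) hζ hper
    simp [Real.pi_ne_zero, I_ne_zero] at this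
  refine ⟨?_, hF0⟩
  have hofReal : Tendsto (fun θ : ℝ => (θ : ℂ)) atTop (comap re atTop) :=
    tendsto_comap_iff.2 tendsto_id
  have hexp : Tendsto (fun θ : ℝ => exp (-(v θ))) atTop (𝓝 0) := by
    refine (hF0 ▸ (hF.continuousOn.continuousAt (Metric.ball_mem_nhds 0 one_pos)).tendsto.comp
      (tendsto_exp_neg_comap_re_atTop.comp hofReal)).congr' ?_
    filter_upwards [eventually_gt_atTop 0] with θ hθ using hlift θ (by simpa using hθ)
  simpa using tendsto_neg_atBot_iff.1 (tendsto_exp_nhds_zero_iff.1 hexp)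

/-- If `v : ℍ → ℍ` is holomorphic on the right half-plane, maps `(0,∞)` into
`(0,∞)`, is injective on `ℍ`, and lifts a holomorphic `F` on the unit disk via
`F(e^{-ζ}) = e^{-v(ζ)}`, then `v(θ) → +∞` as `θ → +∞` along the reals and
`F(0) = 0`. -/
theorem lift_limit_and_F_zero (v F : ℂ → ℂ)
    (hv : DifferentiableOn ℂ v {ζ : ℂ | 0 < ζ.re})
    (hself : ∀ ζ : ℂ, 0 < ζ.re → 0 < (v ζ).re)
    (hreal : ∀ θ : ℝ, 0 < θ → (v θ).im = 0 ∧ 0 < (v θ).re)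
    (hF : DifferentiableOn ℂ F (Metric.ball (0:ℂ) 1))
    (hlift : ∀ ζ : ℂ, 0 < ζ.re → F (Complex.exp (-ζ)) = Complex.exp (-(v ζ)))
    (hinj : InjOn v {ζ : ℂ | 0 < ζ.re}) :
    Tendsto (fun θ : ℝ => (v θ).re) atTop atTop ∧ F 0 = 0 :=
  lift_limit_and_F_zero_general v F hv hF hlift hinj
end
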